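/- Let T > 0, M ∈ ℕ with M ≥ 1, and let β : [0,T] → [0,1]^M be a measurable function such that Σ_{j=1}^M β_j(t) = 1 for almost every t ∈ [0,T]. Let 0 = t_0 < t_1 < … < t_N = T be a partition of [0,T] and set Δt = max_{i} (t_{i+1} − t_i). Then there exists a function α : [0,T] → {0,1}^M that is constant on each subinterval [t_i, t_{i+1}) and satisfies Σ_{j=1}^M α_j(t) = 1 for all t ∈ [0,T], such that max_{j=1,…,M} sup_{t ∈ [0,T]} | ∫_0^t (β_j(s) − α_j(s)) ds | ≤ (M−1)·Δt. -/

import Mathlib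

/-!
Write `b n j = ∫ β_j` over the `n`-th cell (of length `h n = ∑ j, b n j`) and let
`D n = ∫₀^{t_n} (β - α)` be the accumulated error at the grid points. On cell `n`, `α` is the
vertex `e_J` with `J` maximising `D n + b n`, so `D (n+1) = D n + b n - h n • e_J` and
`∑ j, D n j = 0` throughout. By induction, `M • D n ≥ -(M - 1) Δt` (the chosen entry is at least the
average `h n / M`, the others only grow) and `2 • D n ≤ (M - 1) Δt` (two distinct entries of
`D n + b n` add up to at most `h n` minus `M - 2` times the lower bound). Inside a cell `α_j` is
constantly `0` or `1` while `0 ≤ β_j ≤ 1`, so `t ↦ ∫₀^t (β_j - α_j)` is monotone there and the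
bound at the grid points holds for every `t`.
-/

open MeasureTheory Set

lemma intervalIntegral_eq_of_eqOn_Ico {f : ℝ → ℝ} {a b c : ℝ} (hab : a ≤ b)
    (hf : EqOn f (fun _ => c) (Ico a b)) : ∫ x in a..b, f x = (b - a) * c := by
  rw [intervalIntegral.integral_of_le hab, ← integral_Ico_eq_integral_Ioc,
    setIntegral_congr_fun measurableSet_Ico hf]
  simp [hab]

lemma intervalIntegrable_of_abs_le {f : ℝ → ℝ} {a b C : ℝ} (hf : Measurable f)
    (hC : ∀ x ∈ uIcc a b, |f x| ≤ C) : IntervalIntegrable f volume a b :=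
  IntegrableOn.intervalIntegrable <|
    Measure.integrableOn_of_bounded isCompact_uIcc.measure_lt_top.ne hf.aestronglyMeasurable
      ((ae_restrict_iff' measurableSet_uIcc).mpr (.of_forall hC))

lemma intervalIntegrable_of_mem_unitInterval {f : ℝ → ℝ} {a b x y : ℝ} (hf : Measurable f)
    (hf01 : ∀ s ∈ Icc a b, f s ∈ Icc 0 1) (hx : x ∈ Icc a b) (hy : y ∈ Icc a b) :
    IntervalIntegrable f volume x y :=
  intervalIntegrable_of_abs_le (C := 1) hf fun s hs => by
    have h := hf01 s (uIcc_subset_Icc hx hy hs)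
    exact abs_le.mpr ⟨by linarith [h.1], h.2⟩

lemma integral_mem_Icc_of_mem_unitInterval {f : ℝ → ℝ} {a b x y : ℝ} (hf : Measurable f)
    (hf01 : ∀ s ∈ Icc a b, f s ∈ Icc 0 1) (hx : x ∈ Icc a b) (hy : y ∈ Icc a b) (hxy : x ≤ y) :
    ∫ s in x..y, f s ∈ Icc 0 (y - x) := by
  have hsub : Icc x y ⊆ Icc a b := Icc_subset_Icc hx.1 hy.2
  constructor
  · exact intervalIntegral.integral_nonneg hxy fun s hs => (hf01 s (hsub hs)).1
  · simpa [hxy] using intervalIntegral.integral_mono_on hxy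
      (intervalIntegrable_of_mem_unitInterval hf hf01 hx hy) intervalIntegrable_const
      fun s hs => (hf01 s (hsub hs)).2

lemma abs_le_max_of_monotoneOn_or_antitoneOn {f : ℝ → ℝ} {a b t : ℝ}
    (hf : MonotoneOn f (Icc a b) ∨ AntitoneOn f (Icc a b)) (ht : t ∈ Icc a b) :
    |f t| ≤ max |f a| |f b| := by
  have ha : a ∈ Icc a b := ⟨le_rfl, ht.1.trans ht.2⟩
  have hb : b ∈ Icc a b := ⟨ht.1.trans ht.2, le_rfl⟩
  rcases hf with hf | hf
  · exact abs_le_max_abs_abs (hf ha ht ht.1) (hf ht hb ht.2)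
  · exact max_comm |f b| |f a| ▸ abs_le_max_abs_abs (hf ht hb ht.2) (hf ha ht ht.1)

lemma Fin.clamp_val_eq_castSucc {N : ℕ} (i : Fin N) : Fin.clamp i N = i.castSucc :=
  Fin.ext (by simp)

lemma Fin.clamp_val_add_one_eq_succ {N : ℕ} (i : Fin N) : Fin.clamp (i + 1) N = i.succ :=
  Fin.ext (by simp)

namespace SumUpRounding

variable {ι : Type*}

section Deficit

variable [Fintype ι] [Nonempty ι]

noncomputable def argmax (p : ι → ℝ) : ι := (Finite.exists_max p).choose

lemma le_argmax (p : ι → ℝ) (j : ι) : p j ≤ p (argmax p) :=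
  (Finite.exists_max p).choose_spec j

lemma sum_le_card_mul_argmax (p : ι → ℝ) : ∑ j, p j ≤ Fintype.card ι * p (argmax p) := by
  simpa using Finset.sum_le_card_nsmul Finset.univ p _ fun j _ => le_argmax p j

variable [DecidableEq ι]

/-- With `b n` the integral of `β` over the `n`-th cell, `deficit b n = ∫₀^{t_n} (β - α)` and
`α = e_{choice b n}` on that cell. -/
noncomputable def deficit (b : ℕ → ι → ℝ) : ℕ → ι → ℝ
  | 0 => 0
  | n + 1 => deficit b n + b n - Pi.single (argmax (deficit b n + b n)) (∑ j, b n j)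

noncomputable def choice (b : ℕ → ι → ℝ) (n : ℕ) : ι := argmax (deficit b n + b n)

lemma deficit_zero (b : ℕ → ι → ℝ) : deficit b 0 = 0 := rfl

lemma deficit_succ (b : ℕ → ι → ℝ) (n : ℕ) :
    deficit b (n + 1) = deficit b n + b n - Pi.single (choice b n) (∑ j, b n j) := rfl

lemma sum_deficit (b : ℕ → ι → ℝ) (n : ℕ) : ∑ j, deficit b n j = 0 := by
  induction n with
  | zero => simp [deficit_zero]
  | succ n ih => simp [deficit_succ, Finset.sum_add_distrib, Finset.sum_sub_distrib, ih]

variable {b : ℕ → ι → ℝ} {Δ : ℝ} {N : ℕ}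

theorem neg_le_card_mul_deficit (hb : ∀ n < N, ∀ j, 0 ≤ b n j)
    (hΔ : ∀ n < N, ∑ j, b n j ≤ Δ) (hΔ0 : 0 ≤ Δ) :
    ∀ n ≤ N, ∀ j, -((Fintype.card ι - 1) * Δ) ≤ Fintype.card ι * deficit b n j := by
  have hcard : (1 : ℝ) ≤ Fintype.card ι := by exact_mod_cast Fintype.card_pos
  intro n hn
  induction n with
  | zero => intro j; simp only [deficit_zero, Pi.zero_apply, mul_zero]; nlinarith
  | succ n ih =>
    intro j
    have hn' : n < N := hn
    rw [deficit_succ, Pi.sub_apply, Pi.single_apply]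
    split_ifs with hj
    · have hsum : ∑ k, (deficit b n + b n) k = ∑ k, b n k := by
        simp [Finset.sum_add_distrib, sum_deficit]
      have := sum_le_card_mul_argmax (deficit b n + b n)
      rw [hj, choice]
      nlinarith [hΔ n hn']
    · simp only [Pi.add_apply]
      nlinarith [ih hn'.le j, hb n hn' j]

theorem two_mul_deficit_le (hb : ∀ n < N, ∀ j, 0 ≤ b n j)
    (hΔ : ∀ n < N, ∑ j, b n j ≤ Δ) (hΔ0 : 0 ≤ Δ) :
    ∀ n ≤ N, ∀ j, 2 * deficit b n j ≤ (Fintype.card ι - 1) * Δ := by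
  have hcard : (1 : ℝ) ≤ Fintype.card ι := by exact_mod_cast Fintype.card_pos
  intro n hn
  induction n with
  | zero => intro j; simp only [deficit_zero, Pi.zero_apply, mul_zero]; nlinarith
  | succ n ih =>
    intro j
    have hn' : n < N := hn
    set p := deficit b n + b n with hp
    rw [deficit_succ, Pi.sub_apply, Pi.single_apply]
    split_ifs with hj
    · have : b n j ≤ ∑ k, b n k :=
        Finset.single_le_sum (fun k _ => hb n hn' k) (Finset.mem_univ j)
      simp only [Pi.add_apply]
      linarith [ih hn'.le j]
    · have hne : Fintype.card ι - 1 ≥ (1 : ℝ) := by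
        have := Fintype.one_lt_card_iff.mpr ⟨j, choice b n, hj⟩
        have : (2 : ℝ) ≤ Fintype.card ι := by exact_mod_cast this
        linarith
      have hq : ∀ k ∈ Finset.univ,
          0 ≤ Fintype.card ι * p k + (Fintype.card ι - 1) * Δ := fun k _ => by
        have := neg_le_card_mul_deficit hb hΔ hΔ0 n hn'.le k
        simp only [hp, Pi.add_apply]
        nlinarith [hb n hn' k]
      have htwo := Finset.add_le_sum hq (Finset.mem_univ j) (Finset.mem_univ (choice b n)) hj
      have hsum : ∑ k, p k = ∑ k, b n k := by
        simp [hp, Finset.sum_add_distrib, sum_deficit]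
      rw [Finset.sum_add_distrib, ← Finset.mul_sum, hsum] at htwo
      have hmax : p j ≤ p (choice b n) := le_argmax p j
      simp only [Finset.sum_const, Finset.card_univ, nsmul_eq_mul] at htwo
      nlinarith [hΔ n hn']

theorem abs_deficit_le (hb : ∀ n < N, ∀ j, 0 ≤ b n j)
    (hΔ : ∀ n < N, ∑ j, b n j ≤ Δ) (hΔ0 : 0 ≤ Δ) {n : ℕ} (hn : n ≤ N) (j : ι) :
    |deficit b n j| ≤ (Fintype.card ι - 1) * Δ := by
  have hcard : (1 : ℝ) ≤ Fintype.card ι := by exact_mod_cast Fintype.card_pos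
  have hlow := neg_le_card_mul_deficit hb hΔ hΔ0 n hn j
  have hup := two_mul_deficit_le hb hΔ hΔ0 n hn j
  rw [abs_le]
  constructor <;> nlinarith

end Deficit

section Cells

variable {β : ℝ → ι → ℝ} {g : ℕ → ℝ} {N n : ℕ}

noncomputable def cellIntegral (β : ℝ → ι → ℝ) (g : ℕ → ℝ) (n : ℕ) (j : ι) : ℝ :=
  ∫ s in g n..g (n + 1), β s j

/-- Outside `[g 0, g N)` this is `0` or `N`; the control built from it is still a vertex there. -/
noncomputable def cellIndex (g : ℕ → ℝ) (N : ℕ) (s : ℝ) : ℕ :=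
  Nat.findGreatest (fun n => g n ≤ s) N

lemma apply_mem_Icc_of_le (hg : Monotone g) (hn : n ≤ N) : g n ∈ Icc (g 0) (g N) :=
  ⟨hg n.zero_le, hg hn⟩

lemma cellIndex_eq (hg : Monotone g) (hn : n < N) {s : ℝ} (hs : s ∈ Ico (g n) (g (n + 1))) :
    cellIndex g N s = n :=
  Nat.findGreatest_eq_iff.mpr ⟨hn.le, fun _ => hs.1, fun _ hk _ hks =>
    (hs.2.trans_le (hg (Nat.succ_le_of_lt hk))).not_ge hks⟩

lemma exists_mem_cell {s : ℝ} (hs : s ∈ Ico (g 0) (g N)) :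
    ∃ n < N, s ∈ Ico (g n) (g (n + 1)) := by
  have hle : cellIndex g N s ≤ N := Nat.findGreatest_le N
  have hlow : g (cellIndex g N s) ≤ s :=
    Nat.findGreatest_spec (P := fun n => g n ≤ s) N.zero_le hs.1
  have hlt : cellIndex g N s < N :=
    hle.lt_of_ne fun h => (h ▸ hlow).not_gt hs.2
  exact ⟨_, hlt, hlow, not_le.mp (Nat.findGreatest_is_greatest (Nat.lt_succ_self _) hlt)⟩

lemma cellIntegral_nonneg (hg : Monotone g) (hβ : Measurable β)
    (hβrange : ∀ s ∈ Icc (g 0) (g N), ∀ j, β s j ∈ Icc 0 1) (hn : n < N) (j : ι) :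
    0 ≤ cellIntegral β g n j :=
  (integral_mem_Icc_of_mem_unitInterval hβ.eval (fun s hs => hβrange s hs j)
    (apply_mem_Icc_of_le hg hn.le) (apply_mem_Icc_of_le hg hn) (hg n.le_succ)).1

variable [Fintype ι]

lemma sum_cellIntegral (hg : Monotone g) (hβ : Measurable β)
    (hβrange : ∀ s ∈ Icc (g 0) (g N), ∀ j, β s j ∈ Icc 0 1)
    (hβsum : ∀ᵐ s ∂(volume.restrict (Icc (g 0) (g N))), ∑ j, β s j = 1) (hn : n < N) :
    ∑ j, cellIntegral β g n j = g (n + 1) - g n := by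
  have hsub : uIoc (g n) (g (n + 1)) ⊆ Icc (g 0) (g N) := uIoc_subset_uIcc.trans
    (uIcc_subset_Icc (apply_mem_Icc_of_le hg hn.le) (apply_mem_Icc_of_le hg hn))
  simp only [cellIntegral]
  rw [← intervalIntegral.integral_finsetSum fun j _ => intervalIntegrable_of_mem_unitInterval
    hβ.eval (fun s hs => hβrange s hs j) (apply_mem_Icc_of_le hg hn.le) (apply_mem_Icc_of_le hg hn),
    intervalIntegral.integral_congr_ae (g := fun _ => 1)]
  · simp
  · filter_upwards [(ae_restrict_iff' measurableSet_Icc).mp hβsum] with s hs hmem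
    exact hs (hsub hmem)

variable [Nonempty ι] [DecidableEq ι]

noncomputable def roundedControl (β : ℝ → ι → ℝ) (g : ℕ → ℝ) (N : ℕ) (s : ℝ) : ι → ℝ :=
  Pi.single (choice (cellIntegral β g) (cellIndex g N s)) 1

lemma roundedControl_eqOn (hg : Monotone g) (hn : n < N) :
    EqOn (roundedControl β g N) (fun _ => Pi.single (choice (cellIntegral β g) n) 1)
      (Ico (g n) (g (n + 1))) := fun _ hs => by
  simp only [roundedControl, cellIndex_eq hg hn hs]

lemma roundedControl_mem_zero_one (s : ℝ) (j : ι) :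
    roundedControl β g N s j = 0 ∨ roundedControl β g N s j = 1 := by
  rw [roundedControl, Pi.single_apply]
  split_ifs <;> simp

lemma sum_roundedControl (s : ℝ) : ∑ j, roundedControl β g N s j = 1 := by
  simp [roundedControl]

lemma measurable_roundedControl (j : ι) : Measurable fun s => roundedControl β g N s j := by
  have hmono : Monotone (cellIndex g N) := fun _ _ hst =>
    Nat.findGreatest_mono_left (fun _ h => h.trans hst) N
  exact (measurable_from_nat
    (f := fun n => (Pi.single (choice (cellIntegral β g) n) 1 : ι → ℝ) j)).comp hmono.measurable

lemma intervalIntegrable_roundedControl (j : ι) (a b : ℝ) :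
    IntervalIntegrable (fun s => roundedControl β g N s j) volume a b :=
  intervalIntegrable_of_abs_le (C := 1) (measurable_roundedControl j) fun s _ => by
    rcases roundedControl_mem_zero_one (β := β) (g := g) (N := N) s j with h | h <;> simp [h]

lemma intervalIntegrable_sub_roundedControl (hβ : Measurable β)
    (hβrange : ∀ s ∈ Icc (g 0) (g N), ∀ j, β s j ∈ Icc 0 1) (j : ι) {x y : ℝ}
    (hx : x ∈ Icc (g 0) (g N)) (hy : y ∈ Icc (g 0) (g N)) :
    IntervalIntegrable (fun s => β s j - roundedControl β g N s j) volume x y :=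
  (intervalIntegrable_of_mem_unitInterval hβ.eval (fun s hs => hβrange s hs j) hx hy).sub
    (intervalIntegrable_roundedControl j x y)

lemma integral_sub_roundedControl_of_mem_cell (hg : Monotone g) (hβ : Measurable β)
    (hβrange : ∀ s ∈ Icc (g 0) (g N), ∀ j, β s j ∈ Icc 0 1) (hn : n < N) {x y : ℝ}
    (hx : g n ≤ x) (hxy : x ≤ y) (hy : y ≤ g (n + 1)) (j : ι) :
    ∫ s in x..y, (β s j - roundedControl β g N s j) =
      (∫ s in x..y, β s j) -
        (y - x) * (Pi.single (choice (cellIntegral β g) n) 1 : ι → ℝ) j := by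
  have hxI : x ∈ Icc (g 0) (g N) := ⟨hg n.zero_le |>.trans hx, hxy.trans hy |>.trans (hg hn)⟩
  have hyI : y ∈ Icc (g 0) (g N) := ⟨hxI.1.trans hxy, hy.trans (hg hn)⟩
  rw [intervalIntegral.integral_sub
    (intervalIntegrable_of_mem_unitInterval hβ.eval (fun s hs => hβrange s hs j) hxI hyI)
    (intervalIntegrable_roundedControl j x y),
    intervalIntegral_eq_of_eqOn_Ico hxy fun s hs =>
      congrFun (roundedControl_eqOn hg hn ⟨hx.trans hs.1, hs.2.trans_le hy⟩) j]

theorem integral_sub_roundedControl_eq_deficit (hg : Monotone g) (hβ : Measurable β)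
    (hβrange : ∀ s ∈ Icc (g 0) (g N), ∀ j, β s j ∈ Icc 0 1)
    (hβsum : ∀ᵐ s ∂(volume.restrict (Icc (g 0) (g N))), ∑ j, β s j = 1) (j : ι) :
    ∀ n ≤ N, ∫ s in g 0..g n, (β s j - roundedControl β g N s j) =
      deficit (cellIntegral β g) n j := by
  intro n hn
  induction n with
  | zero => simp [deficit_zero]
  | succ n ih =>
    have hn' : n < N := hn
    rw [← intervalIntegral.integral_add_adjacent_intervals
      (intervalIntegrable_sub_roundedControl hβ hβrange j
        (apply_mem_Icc_of_le hg (Nat.zero_le _)) (apply_mem_Icc_of_le hg hn'.le))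
      (intervalIntegrable_sub_roundedControl hβ hβrange j (apply_mem_Icc_of_le hg hn'.le)
        (apply_mem_Icc_of_le hg hn)),
      ih hn'.le, integral_sub_roundedControl_of_mem_cell hg hβ hβrange hn' le_rfl (hg n.le_succ)
        le_rfl, ← cellIntegral, deficit_succ, sum_cellIntegral hg hβ hβrange hβsum hn']
    simp only [Pi.sub_apply, Pi.add_apply, Pi.single_apply]
    split_ifs <;> ring

lemma monotoneOn_or_antitoneOn_integral_sub_roundedControl (hg : Monotone g)
    (hβ : Measurable β) (hβrange : ∀ s ∈ Icc (g 0) (g N), ∀ j, β s j ∈ Icc 0 1) (hn : n < N)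
    (j : ι) :
    MonotoneOn (fun t => ∫ s in g 0..t, (β s j - roundedControl β g N s j))
        (Icc (g n) (g (n + 1))) ∨
      AntitoneOn (fun t => ∫ s in g 0..t, (β s j - roundedControl β g N s j))
        (Icc (g n) (g (n + 1))) := by
  have hcell : Icc (g n) (g (n + 1)) ⊆ Icc (g 0) (g N) := Icc_subset_Icc (hg n.zero_le) (hg hn)
  have hincr : ∀ x ∈ Icc (g n) (g (n + 1)), ∀ y ∈ Icc (g n) (g (n + 1)), x ≤ y →
      (∫ s in g 0..y, (β s j - roundedControl β g N s j)) -
          ∫ s in g 0..x, (β s j - roundedControl β g N s j) =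
        (∫ s in x..y, β s j) -
          (y - x) * (Pi.single (choice (cellIntegral β g) n) 1 : ι → ℝ) j :=
    fun x hx y hy hxy => by
      rw [intervalIntegral.integral_interval_sub_left
        (intervalIntegrable_sub_roundedControl hβ hβrange j (apply_mem_Icc_of_le hg N.zero_le)
          (hcell hy))
        (intervalIntegrable_sub_roundedControl hβ hβrange j (apply_mem_Icc_of_le hg N.zero_le)
          (hcell hx))]
      exact integral_sub_roundedControl_of_mem_cell hg hβ hβrange hn hx.1 hxy hy.2 j
  have hβint : ∀ x ∈ Icc (g n) (g (n + 1)), ∀ y ∈ Icc (g n) (g (n + 1)), x ≤ y →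
      ∫ s in x..y, β s j ∈ Icc 0 (y - x) := fun x hx y hy hxy =>
    integral_mem_Icc_of_mem_unitInterval hβ.eval (fun s hs => hβrange s hs j) (hcell hx)
      (hcell hy) hxy
  by_cases hj : j = choice (cellIntegral β g) n
  · refine .inr fun x hx y hy hxy => ?_
    have h := hincr x hx y hy hxy
    rw [Pi.single_apply, if_pos hj, mul_one] at h
    dsimp only
    linarith [(hβint x hx y hy hxy).2]
  · refine .inl fun x hx y hy hxy => ?_
    have h := hincr x hx y hy hxy
    rw [Pi.single_apply, if_neg hj, mul_zero, sub_zero] at h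
    dsimp only
    linarith [(hβint x hx y hy hxy).1]

theorem abs_integral_sub_roundedControl_le (hg : Monotone g) (hβ : Measurable β)
    (hβrange : ∀ s ∈ Icc (g 0) (g N), ∀ j, β s j ∈ Icc 0 1)
    (hβsum : ∀ᵐ s ∂(volume.restrict (Icc (g 0) (g N))), ∑ j, β s j = 1) {Δ : ℝ}
    (hΔ : ∀ n < N, g (n + 1) - g n ≤ Δ) (hΔ0 : 0 ≤ Δ) (j : ι) {t : ℝ}
    (ht : t ∈ Icc (g 0) (g N)) :
    |∫ s in g 0..t, (β s j - roundedControl β g N s j)| ≤ (Fintype.card ι - 1) * Δ := by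
  have hgrid : ∀ n ≤ N,
      |∫ s in g 0..g n, (β s j - roundedControl β g N s j)| ≤ (Fintype.card ι - 1) * Δ := by
    intro n hn
    rw [integral_sub_roundedControl_eq_deficit hg hβ hβrange hβsum j n hn]
    exact abs_deficit_le (fun m hm => cellIntegral_nonneg hg hβ hβrange hm)
      (fun m hm => sum_cellIntegral hg hβ hβrange hβsum hm ▸ hΔ m hm) hΔ0 hn j
  rcases ht.2.eq_or_lt with rfl | htN
  · exact hgrid N le_rfl
  obtain ⟨n, hn, hmem⟩ := exists_mem_cell ⟨ht.1, htN⟩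
  calc _ ≤ _ := abs_le_max_of_monotoneOn_or_antitoneOn
        (monotoneOn_or_antitoneOn_integral_sub_roundedControl hg hβ hβrange hn j)
        (Ico_subset_Icc_self hmem)
    _ ≤ _ := max_le (hgrid n hn.le) (hgrid (n + 1) hn)

end Cells

end SumUpRounding

open SumUpRounding in
theorem sum_up_rounding_general
    (T : ℝ) (M : ℕ) (hM : 1 ≤ M)
    (β : ℝ → Fin M → ℝ) (hβmeas : Measurable β)
    (hβrange : ∀ t ∈ Icc (0:ℝ) T, ∀ j, β t j ∈ Icc (0:ℝ) 1)
    (hβsum : ∀ᵐ t ∂(volume.restrict (Icc (0:ℝ) T)), ∑ j, β t j = 1)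
    (N : ℕ) (τ : Fin (N + 1) → ℝ)
    (hτ0 : τ 0 = 0) (hτN : τ (Fin.last N) = T)
    (hτmono : StrictMono τ)
    (Δt : ℝ)
    (hΔt : Δt = ⨆ i : Fin N, (τ i.succ - τ i.castSucc)) :
    ∃ α : ℝ → Fin M → ℝ,
      (∀ i : Fin N, ∀ s₁ ∈ Ico (τ i.castSucc) (τ i.succ),
        ∀ s₂ ∈ Ico (τ i.castSucc) (τ i.succ), α s₁ = α s₂) ∧
      (∀ t ∈ Icc (0:ℝ) T, (∀ j, α t j = 0 ∨ α t j = 1) ∧ ∑ j, α t j = 1) ∧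
      (∀ j : Fin M, ∀ t ∈ Icc (0:ℝ) T,
        |∫ s in (0:ℝ)..t, (β s j - α s j)| ≤ ((M : ℝ) - 1) * Δt) := by
  have : Nonempty (Fin M) := ⟨⟨0, hM⟩⟩
  set g : ℕ → ℝ := fun n => τ (Fin.clamp n N)
  have hg : Monotone g := hτmono.monotone.comp Fin.clamp_monotone
  have hg0 : g 0 = 0 := (congrArg τ (Fin.ext (by simp))).trans hτ0
  have hgN : g N = T := (congrArg τ (Fin.clamp_eq_last N N le_rfl)).trans hτN
  have hcell (i : Fin N) : Ico (τ i.castSucc) (τ i.succ) = Ico (g i) (g (i + 1)) := by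
    simp only [g, Fin.clamp_val_eq_castSucc, Fin.clamp_val_add_one_eq_succ]
  have hΔ (n : ℕ) (hn : n < N) : g (n + 1) - g n ≤ Δt := by
    have h := le_ciSup (f := fun i : Fin N => τ i.succ - τ i.castSucc) (Finite.bddAbove_range _)
      ⟨n, hn⟩
    rwa [← hΔt, ← Fin.clamp_val_eq_castSucc, ← Fin.clamp_val_add_one_eq_succ] at h
  have hΔ0 : 0 ≤ Δt :=
    hΔt ▸ Real.iSup_nonneg fun i => sub_nonneg.mpr (hτmono.monotone (Fin.castSucc_le_succ i))
  have hgI : Icc (g 0) (g N) = Icc 0 T := by rw [hg0, hgN]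
  rw [← hgI] at hβrange hβsum
  refine ⟨roundedControl β g N, fun i s₁ h₁ s₂ h₂ => ?_,
    fun t _ => ⟨roundedControl_mem_zero_one t, sum_roundedControl t⟩, fun j t ht => ?_⟩
  · rw [hcell] at h₁ h₂
    rw [roundedControl_eqOn hg i.2 h₁, roundedControl_eqOn hg i.2 h₂]
  · simpa [hg0] using abs_integral_sub_roundedControl_le hg hβmeas hβrange hβsum hΔ hΔ0 j
      (hgI ▸ ht)

/-- Sum-up rounding (Lemma 2.1): a relaxed simplex-valued control `β` on `[0,T]` can be
approximated by a binary control `α`, piecewise constant on a given grid, with integrated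
difference bounded by `(M-1) Δt`. -/
theorem sum_up_rounding
    (T : ℝ) (hT : 0 < T) (M : ℕ) (hM : 1 ≤ M)
    (β : ℝ → Fin M → ℝ) (hβmeas : Measurable β)
    (hβrange : ∀ t ∈ Icc (0:ℝ) T, ∀ j, β t j ∈ Icc (0:ℝ) 1)
    (hβsum : ∀ᵐ t ∂(volume.restrict (Icc (0:ℝ) T)), ∑ j, β t j = 1)
    (N : ℕ) (hN : 0 < N) (τ : Fin (N + 1) → ℝ)
    (hτ0 : τ 0 = 0) (hτN : τ (Fin.last N) = T)
    (hτmono : StrictMono τ)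
    (Δt : ℝ)
    (hΔt : Δt = ⨆ i : Fin N, (τ i.succ - τ i.castSucc)) :
    ∃ α : ℝ → Fin M → ℝ,
      (∀ i : Fin N, ∀ s₁ ∈ Ico (τ i.castSucc) (τ i.succ),
        ∀ s₂ ∈ Ico (τ i.castSucc) (τ i.succ), α s₁ = α s₂) ∧
      (∀ t ∈ Icc (0:ℝ) T, (∀ j, α t j = 0 ∨ α t j = 1) ∧ ∑ j, α t j = 1) ∧
      (∀ j : Fin M, ∀ t ∈ Icc (0:ℝ) T,
        |∫ s in (0:ℝ)..t, (β s j - α s j)| ≤ ((M : ℝ) - 1) * Δt) :=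
  sum_up_rounding_general T M hM β hβmeas hβrange hβsum N τ hτ0 hτN hτmono Δt hΔt
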